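/- Let c > 0, I = [−2c, 2c], 0 < a < b, let α(t) = (t, t²+t⁴, t³), and let S = { α(t) + v α'(t) : t ∈ I, a < v < b } ⊆ ℝ³ be the tangent surface generated by the perturbed helix α. Then dim_F(S) ≤ 1; equivalently, if μ is a nonzero finite Borel measure supported on S and β > 0 satisfies sup_{ξ∈ℝ³} |ξ|^{β/2}|μ̂(ξ)| < ∞, then β ≤ 1. -/

import Mathlib

/-!
If `|μ̂(ξ)| ≲ |ξ|^{-r}` with `r < 1`, then testing `μ` against the Gaussian weight
`exp(-(⟪x, e⟫ - c)² / 2δ²)`, whose Fourier transform is again a Gaussian, shows that every slab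
`{x | |⟪x, e⟫ - c| ≤ δ}` has measure `O(δ^r)`.

The tangent surface of `α` is developable: along the ruling through `α(t₀)` its tangent plane is
the plane through `α(t₀)` normal to `α'(t₀) × α''(t₀)`, and the surface stays within
`O((t - t₀)²)` of that plane. Taking `t₀` on a grid of mesh `σ` covers `S` by `O(1/σ)` slabs of
width `O(σ²)`, so `μ(S) = O(σ^{2r - 1})`, which tends to `0` as soon as `r > 1/2`, i.e. `s > 1`.
-/

open MeasureTheory Real Set

/-- The Fourier transform of a measure on `ℝ^n`:  `μ̂(ξ) = ∫ e^{−2πi x·ξ} dμ(x)`. -/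
noncomputable def mft {n : ℕ} (μ : Measure (EuclideanSpace ℝ (Fin n)))
    (ξ : EuclideanSpace ℝ (Fin n)) : ℂ :=
  ∫ x, Complex.exp (((-2 * Real.pi * inner ℝ x ξ : ℝ) : ℂ) * Complex.I) ∂μ

/-- The Fourier dimension of a set `A ⊆ ℝ^n`. -/
noncomputable def fourierDim {n : ℕ} (A : Set (EuclideanSpace ℝ (Fin n))) : ℝ :=
  sSup {s : ℝ | 0 ≤ s ∧ s ≤ (n : ℝ) ∧
    ∃ μ : Measure (EuclideanSpace ℝ (Fin n)), IsFiniteMeasure μ ∧ μ ≠ 0 ∧ μ Aᶜ = 0 ∧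
      ∃ C : ℝ, ∀ ξ : EuclideanSpace ℝ (Fin n), ‖ξ‖ ^ (s / 2) * ‖mft μ ξ‖ ≤ C}

/-- A point of `ℝ³` from three coordinates. -/
noncomputable def pt3 (x y z : ℝ) : EuclideanSpace ℝ (Fin 3) :=
  (EuclideanSpace.equiv (Fin 3) ℝ).symm ![x, y, z]

open scoped RealInnerProductSpace NNReal
open ProbabilityTheory Filter Topology

lemma integral_charFun_comm {E : Type*} [NormedAddCommGroup E] [InnerProductSpace ℝ E]
    [MeasurableSpace E] [BorelSpace E] [SecondCountableTopology E] (μ ν : Measure E)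
    [IsFiniteMeasure μ] [IsFiniteMeasure ν] : ∫ t, charFun μ t ∂ν = ∫ x, charFun ν x ∂μ := by
  simp only [charFun_apply]
  have hint : Integrable (Function.uncurry fun t x ↦ Complex.exp (⟪x, t⟫ * Complex.I))
      (ν.prod μ) :=
    .of_bound (by fun_prop) 1 (.of_forall fun _ ↦ (Complex.norm_exp_ofReal_mul_I _).le)
  rw [integral_integral_swap hint]
  simp_rw [real_inner_comm]

lemma integrable_abs_rpow_mul_exp_neg_mul_sq {b : ℝ} (hb : 0 < b) {s : ℝ} (hs : -1 < s) :
    Integrable fun x : ℝ ↦ |x| ^ s * rexp (-b * x ^ 2) := by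
  have hpos : IntegrableOn (fun x : ℝ ↦ |x| ^ s * rexp (-b * x ^ 2)) (Ioi 0) :=
    (integrableOn_rpow_mul_exp_neg_mul_sq hb hs).congr_fun
      (fun x hx ↦ by rw [abs_of_pos hx]) measurableSet_Ioi
  rw [← integrableOn_univ, ← Iio_union_Ici (a := (0 : ℝ)), integrableOn_union,
    integrableOn_Ici_iff_integrableOn_Ioi]
  refine ⟨?_, hpos⟩
  rw [← (Measure.measurePreserving_neg (volume : Measure ℝ)).integrableOn_comp_preimage
    (Homeomorph.neg ℝ).measurableEmbedding]
  simpa only [Function.comp_def, neg_preimage, neg_Iio, neg_zero, abs_neg, neg_sq] using hpos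

lemma integrable_abs_rpow_gaussianReal {p : ℝ} (hp : -1 < p) (v : ℝ≥0) :
    Integrable (fun x : ℝ ↦ |x| ^ p) (gaussianReal 0 v) := by
  rcases eq_or_ne v 0 with rfl | hv
  · rw [gaussianReal_zero_var]
    exact integrable_dirac enorm_lt_top
  rw [gaussianReal_of_var_ne_zero 0 hv, integrable_withDensity_iff_integrable_smul'
    (measurable_gaussianPDF 0 v) (.of_forall fun _ ↦ gaussianPDF_lt_top)]
  have hb : 0 < (2 * v : ℝ)⁻¹ := by positivity
  refine ((integrable_abs_rpow_mul_exp_neg_mul_sq hb hp).const_mul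
    (√(2 * π * v))⁻¹).congr (.of_forall fun x ↦ ?_)
  simp only [toReal_gaussianPDF, gaussianPDFReal_def, smul_eq_mul, sub_zero]
  ring_nf

lemma charFun_gaussianReal_zero_one (x : ℝ) :
    charFun (gaussianReal 0 1) x = ↑(rexp (-x ^ 2 / 2)) := by
  simp [charFun_gaussianReal, neg_div]

lemma measureReal_Icc_le_integral_norm_charFun (ν : Measure ℝ) [IsFiniteMeasure ν] :
    ν.real (Icc (-1) 1) ≤ rexp (1 / 2) * ∫ t, ‖charFun ν t‖ ∂gaussianReal 0 1 := by
  have hint : Integrable (fun x ↦ rexp (-x ^ 2 / 2)) ν :=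
    .of_bound (by fun_prop) 1 (.of_forall fun x ↦ by
      simp only [norm_eq_abs, abs_exp, exp_le_one_iff]; nlinarith [sq_nonneg x])
  have hIcc : Icc (-1) 1 ⊆ {x : ℝ | rexp (-1 / 2) ≤ rexp (-x ^ 2 / 2)} := fun x hx ↦ by
    have : x ^ 2 ≤ 1 := by nlinarith [hx.1, hx.2]
    simp only [mem_ofPred_eq, exp_le_exp]
    linarith
  calc ν.real (Icc (-1) 1) = rexp (1 / 2) * (rexp (-1 / 2) * ν.real (Icc (-1) 1)) := by
        rw [← mul_assoc, ← exp_add]; norm_num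
    _ ≤ rexp (1 / 2) * ∫ x, rexp (-x ^ 2 / 2) ∂ν := by
        gcongr
        exact (mul_le_mul_of_nonneg_left (measureReal_mono hIcc) (exp_pos _).le).trans
          (mul_meas_ge_le_integral_of_nonneg (.of_forall fun _ ↦ (exp_pos _).le) hint _)
    _ = rexp (1 / 2) * ‖∫ t, charFun ν t ∂gaussianReal 0 1‖ := by
        rw [integral_charFun_comm]
        simp_rw [charFun_gaussianReal_zero_one]
        rw [integral_complex_ofReal, Complex.norm_real, Real.norm_of_nonneg
          (integral_nonneg fun _ ↦ (exp_pos _).le)]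
    _ ≤ rexp (1 / 2) * ∫ t, ‖charFun ν t‖ ∂gaussianReal 0 1 := by
        gcongr
        exact norm_integral_le_integral_norm _

lemma norm_charFun_le_of_decay {ν : Measure ℝ} {r C : ℝ} (hdec : ∀ t, |t| ^ r * ‖charFun ν t‖ ≤ C)
    {t : ℝ} (ht : t ≠ 0) : ‖charFun ν t‖ ≤ C * |t| ^ (-r) := by
  have hpos : 0 < |t| ^ r := rpow_pos_of_pos (abs_pos.mpr ht) r
  rw [rpow_neg (abs_nonneg t), ← div_eq_mul_inv, le_div_iff₀ hpos, mul_comm]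
  exact hdec t

lemma measureReal_Icc_le_of_charFun_decay (ν : Measure ℝ) [IsFiniteMeasure ν] {r C : ℝ}
    (hr : r < 1) (hdec : ∀ t, |t| ^ r * ‖charFun ν t‖ ≤ C) {δ : ℝ} (hδ : 0 < δ) :
    ν.real (Icc (-δ) δ) ≤ rexp (1 / 2) * C * (∫ z, |z| ^ (-r) ∂gaussianReal 0 1) * δ ^ r := by
  have : NullSingletonClass (gaussianReal 0 1) := nullSingletonClass_gaussianReal one_ne_zero
  set ν' := ν.map (δ⁻¹ * ·)
  have hscale : ν.real (Icc (-δ) δ) = ν'.real (Icc (-1) 1) := by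
    rw [map_measureReal_apply (measurable_const_mul _) measurableSet_Icc]
    congr 1
    ext x
    simp only [mem_Icc, mem_preimage, ← div_eq_inv_mul, le_div_iff₀ hδ, div_le_iff₀ hδ]
    constructor <;> rintro ⟨h₁, h₂⟩ <;> constructor <;> linarith
  have hdecay : ∀ᵐ t ∂gaussianReal 0 1, ‖charFun ν' t‖ ≤ C * δ ^ r * |t| ^ (-r) := by
    filter_upwards [compl_mem_ae_iff.mpr (measure_singleton 0)] with t ht
    have ht : δ⁻¹ * t ≠ 0 := mul_ne_zero (inv_ne_zero hδ.ne') ht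
    rw [charFun_map_mul]
    refine (norm_charFun_le_of_decay hdec ht).trans_eq ?_
    rw [abs_mul, abs_inv, abs_of_pos hδ, mul_rpow (inv_nonneg.mpr hδ.le) (abs_nonneg t),
      inv_rpow hδ.le, rpow_neg hδ.le, inv_inv, mul_assoc]
  calc ν.real (Icc (-δ) δ) = ν'.real (Icc (-1) 1) := hscale
    _ ≤ rexp (1 / 2) * ∫ t, ‖charFun ν' t‖ ∂gaussianReal 0 1 :=
        measureReal_Icc_le_integral_norm_charFun ν'
    _ ≤ rexp (1 / 2) * ∫ t, C * δ ^ r * |t| ^ (-r) ∂gaussianReal 0 1 := by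
        refine mul_le_mul_of_nonneg_left (integral_mono_ae ?_ ?_ hdecay) (exp_pos _).le
        · exact .of_bound continuous_charFun.norm.aestronglyMeasurable _
            (.of_forall fun _ ↦ (norm_norm _).trans_le (norm_charFun_le _))
        · exact (integrable_abs_rpow_gaussianReal (by linarith) 1).const_mul _
    _ = rexp (1 / 2) * C * (∫ z, |z| ^ (-r) ∂gaussianReal 0 1) * δ ^ r := by
        rw [integral_const_mul]; ring

section Slab

variable {E : Type*} [NormedAddCommGroup E] [InnerProductSpace ℝ E]

def slab (e : E) (c δ : ℝ) : Set E := {x | |⟪x, e⟫ - c| ≤ δ}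

lemma slab_mono {e : E} {c δ δ' : ℝ} (h : δ ≤ δ') : slab e c δ ⊆ slab e c δ' :=
  fun _ hx ↦ le_trans hx h

variable [MeasurableSpace E] [BorelSpace E]

lemma norm_charFun_map_inner_sub (μ : Measure E) (e : E) (c t : ℝ) :
    ‖charFun (μ.map fun x ↦ ⟪x, e⟫ - c) t‖ = ‖charFun μ (t • e)‖ := by
  have hphase : ∀ x : E, Complex.exp (⟪⟪x, e⟫ - c, t⟫ * Complex.I) =
      Complex.exp (⟪x, t • e⟫ * Complex.I) * Complex.exp (↑(-(c * t)) * Complex.I) := by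
    intro x
    rw [← Complex.exp_add, real_inner_smul_right, real_inner_eq_re_inner ℝ]
    simp only [RCLike.inner_apply, conj_trivial, RCLike.re_to_real]
    push_cast
    ring_nf
  rw [charFun_apply, charFun_apply, integral_map (by fun_prop) (by fun_prop)]
  simp_rw [hphase]
  rw [integral_mul_const, norm_mul, Complex.norm_exp_ofReal_mul_I, mul_one]

lemma measureReal_slab_le_of_charFun_decay (μ : Measure E) [IsFiniteMeasure μ] {r C : ℝ}
    (hr : r < 1) (hdec : ∀ ξ, ‖ξ‖ ^ r * ‖charFun μ ξ‖ ≤ C) {e : E} (he : ‖e‖ = 1) (c : ℝ)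
    {δ : ℝ} (hδ : 0 < δ) :
    μ.real (slab e c δ) ≤
      rexp (1 / 2) * C * (∫ z, |z| ^ (-r) ∂gaussianReal 0 1) * δ ^ r := by
  have hmeas : Measurable fun x : E ↦ ⟪x, e⟫ - c := by fun_prop
  have hslab : slab e c δ = (fun x ↦ ⟪x, e⟫ - c) ⁻¹' Icc (-δ) δ := by
    ext x; simp [slab, abs_le]
  rw [hslab, ← map_measureReal_apply hmeas measurableSet_Icc]
  refine measureReal_Icc_le_of_charFun_decay _ hr (fun t ↦ ?_) hδ
  rw [norm_charFun_map_inner_sub]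
  simpa [norm_smul, he] using hdec (t • e)

end Slab

lemma mft_eq_charFun {n : ℕ} (μ : Measure (EuclideanSpace ℝ (Fin n)))
    (ξ : EuclideanSpace ℝ (Fin n)) : mft μ ξ = charFun μ (-(2 * π) • ξ) := by
  simp only [mft, charFun_apply, real_inner_smul_right]
  congr with x
  push_cast
  ring_nf

lemma charFun_decay_of_mft_decay {n : ℕ} {μ : Measure (EuclideanSpace ℝ (Fin n))} {r C : ℝ}
    (hdec : ∀ ξ, ‖ξ‖ ^ r * ‖mft μ ξ‖ ≤ C) (ξ : EuclideanSpace ℝ (Fin n)) :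
    ‖ξ‖ ^ r * ‖charFun μ ξ‖ ≤ (2 * π) ^ r * C := by
  have h2π : 0 < 2 * π := by positivity
  have h := hdec (-(2 * π)⁻¹ • ξ)
  rw [mft_eq_charFun, smul_smul, neg_mul_neg, mul_inv_cancel₀ h2π.ne', one_smul, norm_smul,
    norm_neg, norm_inv, Real.norm_of_nonneg h2π.le, mul_rpow (by positivity) (norm_nonneg _),
    inv_rpow h2π.le, mul_assoc] at h
  have hpow : 0 < (2 * π) ^ r := rpow_pos_of_pos h2π r
  calc ‖ξ‖ ^ r * ‖charFun μ ξ‖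
      = (2 * π) ^ r * (((2 * π) ^ r)⁻¹ * (‖ξ‖ ^ r * ‖charFun μ ξ‖)) := by field_simp
    _ ≤ (2 * π) ^ r * C := by gcongr

lemma charFun_decay_of_exponent_le {E : Type*} [NormedAddCommGroup E] [InnerProductSpace ℝ E]
    [MeasurableSpace E] {μ : Measure E} [IsFiniteMeasure μ] {r r' C : ℝ}
    (hdec : ∀ ξ, ‖ξ‖ ^ r * ‖charFun μ ξ‖ ≤ C) (hr' : 0 ≤ r') (hrr : r' ≤ r) (ξ : E) :
    ‖ξ‖ ^ r' * ‖charFun μ ξ‖ ≤ max C (μ.real univ) := by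
  rcases le_or_gt ‖ξ‖ 1 with hξ | hξ
  · calc ‖ξ‖ ^ r' * ‖charFun μ ξ‖ ≤ 1 * μ.real univ :=
          mul_le_mul (rpow_le_one (norm_nonneg _) hξ hr') (norm_charFun_le ξ) (norm_nonneg _)
            zero_le_one
      _ ≤ max C (μ.real univ) := by rw [one_mul]; exact le_max_right _ _
  · calc ‖ξ‖ ^ r' * ‖charFun μ ξ‖ ≤ ‖ξ‖ ^ r * ‖charFun μ ξ‖ := by
          gcongr
          exact hξ.le
      _ ≤ max C (μ.real univ) := (hdec ξ).trans (le_max_left _ _)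

lemma exists_grid_point {p q σ t : ℝ} (hσ : 0 < σ) (ht : t ∈ Icc p q) :
    ∃ j < ⌊(q - p) / σ⌋₊ + 1, p + j * σ ∈ Icc p q ∧ |t - (p + j * σ)| ≤ σ := by
  have hnonneg : 0 ≤ (t - p) / σ := div_nonneg (by linarith [ht.1]) hσ.le
  have hlo : ⌊(t - p) / σ⌋₊ * σ ≤ t - p := (le_div_iff₀ hσ).mp (Nat.floor_le hnonneg)
  have hhi : t - p < (⌊(t - p) / σ⌋₊ + 1) * σ := (div_lt_iff₀ hσ).mp (Nat.lt_floor_add_one _)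
  have hj : ⌊(t - p) / σ⌋₊ ≤ ⌊(q - p) / σ⌋₊ := Nat.floor_mono (by gcongr; exact ht.2)
  refine ⟨⌊(t - p) / σ⌋₊, Nat.lt_succ_of_le hj, ⟨?_, ?_⟩, ?_⟩
  · nlinarith [Nat.cast_nonneg (α := ℝ) ⌊(t - p) / σ⌋₊]
  · linarith [ht.2]
  · rw [abs_le]; constructor <;> nlinarith

lemma natFloor_div_add_one_le {x σ : ℝ} (hσ : 0 < σ) (hσ1 : σ ≤ 1) :
    (⌊x / σ⌋₊ + 1 : ℕ) ≤ (|x| + 1) / σ := by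
  have hfloor : (⌊x / σ⌋₊ : ℝ) ≤ |x| / σ := by
    rcases le_or_gt 0 x with hx | hx
    · rw [abs_of_nonneg hx]; exact Nat.floor_le (div_nonneg hx hσ.le)
    · rw [Nat.floor_eq_zero.mpr (by linarith [div_neg_of_neg_of_pos hx hσ]), Nat.cast_zero]
      positivity
  rw [add_div]
  push_cast
  gcongr
  rwa [le_div_iff₀ hσ, one_mul]

section SlabFamily

variable {E : Type*} [NormedAddCommGroup E] [InnerProductSpace ℝ E] [MeasurableSpace E]
  (μ : Measure E) [IsFiniteMeasure μ] {S : Set E} {K r p q M : ℝ} {e : ℝ → E} {c : ℝ → ℝ}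

lemma measureReal_univ_le_of_slab_family (hμS : μ Sᶜ = 0)
    (hslab : ∀ e : E, ‖e‖ = 1 → ∀ c δ, 0 < δ → μ.real (slab e c δ) ≤ K * δ ^ r)
    (hM : 0 < M) (he : ∀ t, ‖e t‖ = 1)
    (hS : ∀ x ∈ S, ∃ t ∈ Icc p q, ∀ t₀ ∈ Icc p q, x ∈ slab (e t₀) (c t₀) (M * (t - t₀) ^ 2))
    {σ : ℝ} (hσ : 0 < σ) (hσ1 : σ ≤ 1) :
    μ.real univ ≤ (|q - p| + 1) * K * M ^ r * σ ^ (2 * r - 1) := by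
  set N := ⌊(q - p) / σ⌋₊ + 1
  set grid : ℕ → ℝ := fun j ↦ p + j * σ
  have hcover : S ⊆ ⋃ j ∈ Finset.range N, slab (e (grid j)) (c (grid j)) (M * σ ^ 2) := by
    intro x hx
    obtain ⟨t, ht, hxt⟩ := hS x hx
    obtain ⟨j, hj, hgrid, hdist⟩ := exists_grid_point hσ ht
    refine mem_biUnion (Finset.mem_range.mpr hj) (slab_mono ?_ (hxt _ hgrid))
    exact mul_le_mul_of_nonneg_left (sq_le_sq' (abs_le.mp hdist).1 (abs_le.mp hdist).2) hM.le
  have hK : 0 ≤ K * (M * σ ^ 2) ^ r :=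
    measureReal_nonneg.trans (hslab (e 0) (he 0) 0 _ (by positivity))
  have hμuniv : μ.real univ ≤ μ.real S := by
    calc μ.real univ ≤ μ.real S + μ.real Sᶜ := union_compl_self S ▸ measureReal_union_le S Sᶜ
      _ = μ.real S := by simp [Measure.real, hμS]
  calc μ.real univ
      ≤ ∑ j ∈ Finset.range N, μ.real (slab (e (grid j)) (c (grid j)) (M * σ ^ 2)) :=
        hμuniv.trans <| (measureReal_mono hcover (measure_ne_top _ _)).trans
          (measureReal_biUnion_finset_le _ _)
    _ ≤ N * (K * (M * σ ^ 2) ^ r) := by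
        grw [Finset.sum_le_sum fun j _ ↦ hslab _ (he (grid j)) (c (grid j)) _ (by positivity)]
        rw [Finset.sum_const, Finset.card_range, nsmul_eq_mul]
    _ ≤ (|q - p| + 1) / σ * (K * (M * σ ^ 2) ^ r) := by
        gcongr
        exact natFloor_div_add_one_le hσ hσ1
    _ = (|q - p| + 1) * K * M ^ r * σ ^ (2 * r - 1) := by
        rw [mul_rpow hM.le (by positivity), ← rpow_natCast, ← rpow_mul hσ.le, rpow_sub hσ,
          rpow_one]
        push_cast
        ring

theorem measure_eq_zero_of_slab_family (hμS : μ Sᶜ = 0)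
    (hslab : ∀ e : E, ‖e‖ = 1 → ∀ c δ, 0 < δ → μ.real (slab e c δ) ≤ K * δ ^ r)
    (hM : 0 < M) (he : ∀ t, ‖e t‖ = 1)
    (hS : ∀ x ∈ S, ∃ t ∈ Icc p q, ∀ t₀ ∈ Icc p q, x ∈ slab (e t₀) (c t₀) (M * (t - t₀) ^ 2))
    (hr : 1 / 2 < r) : μ = 0 := by
  have hlim : Tendsto (fun σ : ℝ ↦ (|q - p| + 1) * K * M ^ r * σ ^ (2 * r - 1)) (𝓝[>] 0)
      (𝓝 0) := by
    have hpow := (continuousAt_rpow_const 0 (2 * r - 1) (Or.inr (by linarith))).tendsto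
    rw [zero_rpow (by linarith)] at hpow
    simpa using (hpow.mono_left nhdsWithin_le_nhds).const_mul ((|q - p| + 1) * K * M ^ r)
  have hle : μ.real univ ≤ 0 := by
    refine ge_of_tendsto hlim ?_
    filter_upwards [Ioc_mem_nhdsGT zero_lt_one] with σ hσ
    exact measureReal_univ_le_of_slab_family μ hμS hslab hM he hS hσ.1 hσ.2
  have hzero : μ.real univ = 0 := le_antisymm hle measureReal_nonneg
  rwa [measureReal_eq_zero_iff, Measure.measure_univ_eq_zero] at hzero

end SlabFamily

local notation "ℝ³" => EuclideanSpace ℝ (Fin 3)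

noncomputable def helix (t : ℝ) : ℝ³ := pt3 t (t ^ 2 + t ^ 4) (t ^ 3)

noncomputable def helixTangent (t v : ℝ) : ℝ³ :=
  pt3 (t + v) (t ^ 2 + t ^ 4 + v * (2 * t + 4 * t ^ 3)) (t ^ 3 + v * (3 * t ^ 2))

/-- `α'(t) × α''(t)` for `α = helix`. -/
noncomputable def helixBinormal (t : ℝ) : ℝ³ :=
  pt3 (6 * t ^ 2 - 12 * t ^ 4) (-6 * t) (2 + 12 * t ^ 2)

noncomputable def helixUnitBinormal (t : ℝ) : ℝ³ := ‖helixBinormal t‖⁻¹ • helixBinormal t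

lemma inner_pt3 (x y z x' y' z' : ℝ) :
    ⟪pt3 x y z, pt3 x' y' z'⟫ = x * x' + y * y' + z * z' := by
  simp [pt3, PiLp.inner_apply, Fin.sum_univ_three]
  ring

lemma inner_helixTangent_sub_helix_helixBinormal (t t₀ v : ℝ) :
    ⟪helixTangent t v - helix t₀, helixBinormal t₀⟫ =
      ((6 - 36 * t₀ ^ 2) * v + (t - t₀) * (2 - 24 * t₀ * v - 12 * t₀ ^ 2) - 6 * t₀ * (t - t₀) ^ 2)
        * (t - t₀) ^ 2 := by
  rw [inner_sub_left, helixTangent, helix, helixBinormal, inner_pt3, inner_pt3]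
  ring

lemma one_le_norm_helixBinormal (t : ℝ) : 1 ≤ ‖helixBinormal t‖ := by
  have h := PiLp.norm_apply_le (helixBinormal t) 2
  have h2 : helixBinormal t 2 = 2 + 12 * t ^ 2 := by simp [helixBinormal, pt3]
  rw [h2, Real.norm_of_nonneg (by positivity)] at h
  nlinarith [sq_nonneg t]

lemma norm_helixUnitBinormal (t : ℝ) : ‖helixUnitBinormal t‖ = 1 := by
  have h := one_le_norm_helixBinormal t
  rw [helixUnitBinormal, norm_smul, norm_inv, norm_norm, inv_mul_cancel₀ (by positivity)]

lemma exists_helixTangent_mem_slab (p q a b : ℝ) :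
    ∃ M > 0, ∀ t ∈ Icc p q, ∀ t₀ ∈ Icc p q, ∀ v ∈ Icc a b, helixTangent t v ∈
      slab (helixUnitBinormal t₀) ⟪helix t₀, helixUnitBinormal t₀⟫ (M * (t - t₀) ^ 2) := by
  have hbox : IsCompact (Icc p q ×ˢ Icc p q ×ˢ Icc a b) :=
    isCompact_Icc.prod (isCompact_Icc.prod isCompact_Icc)
  obtain ⟨M, hM⟩ := hbox.exists_bound_of_continuousOn
    (f := fun x : ℝ × ℝ × ℝ ↦ (6 - 36 * x.2.1 ^ 2) * x.2.2 +
      (x.1 - x.2.1) * (2 - 24 * x.2.1 * x.2.2 - 12 * x.2.1 ^ 2) - 6 * x.2.1 * (x.1 - x.2.1) ^ 2)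
    (by fun_prop)
  refine ⟨max M 1, by positivity, fun t ht t₀ ht₀ v hv ↦ ?_⟩
  have hbound := hM (t, t₀, v) ⟨ht, ht₀, hv⟩
  rw [Real.norm_eq_abs] at hbound
  show |⟪helixTangent t v, _⟫ - ⟪helix t₀, _⟫| ≤ _
  rw [← inner_sub_left, helixUnitBinormal, real_inner_smul_right,
    inner_helixTangent_sub_helix_helixBinormal, abs_mul, abs_mul,
    abs_of_nonneg (inv_nonneg.mpr (norm_nonneg _)), abs_of_nonneg (sq_nonneg (t - t₀))]
  calc _ ≤ 1 * (M * (t - t₀) ^ 2) :=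
        mul_le_mul (inv_le_one_of_one_le₀ (one_le_norm_helixBinormal t₀))
          (mul_le_mul_of_nonneg_right hbound (sq_nonneg _)) (by positivity) zero_le_one
    _ ≤ max M 1 * (t - t₀) ^ 2 := by
        rw [one_mul]
        gcongr
        exact le_max_left M 1

theorem statement6_general (a b c : ℝ)
    (S : Set (EuclideanSpace ℝ (Fin 3)))
    (hS : S = {x : EuclideanSpace ℝ (Fin 3) | ∃ t v : ℝ,
      t ∈ Set.Icc (-(2 * c)) (2 * c) ∧ v ∈ Set.Ioo a b ∧
      x = pt3 (t + v) (t ^ 2 + t ^ 4 + v * (2 * t + 4 * t ^ 3)) (t ^ 3 + v * (3 * t ^ 2))}) :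
    fourierDim S ≤ 1 := by
  refine Real.sSup_le ?_ zero_le_one
  rintro s ⟨-, -, μ, hμ, hμ0, hμS, C, hdec⟩
  by_contra! hs
  set r := min (s / 2) (3 / 4)
  have hdecay : ∀ ξ, ‖ξ‖ ^ r * ‖charFun μ ξ‖ ≤ max ((2 * π) ^ (s / 2) * C) (μ.real univ) :=
    charFun_decay_of_exponent_le (charFun_decay_of_mft_decay hdec) (by positivity) (min_le_left _ _)
  have hslab (e : ℝ³) (he : ‖e‖ = 1) (c₀ δ : ℝ) (hδ : 0 < δ) :=
    measureReal_slab_le_of_charFun_decay μ ((min_le_right _ _).trans_lt (by norm_num)) hdecay he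
      c₀ hδ
  obtain ⟨M, hM, hmem⟩ := exists_helixTangent_mem_slab (-(2 * c)) (2 * c) a b
  have hcover : ∀ x ∈ S, ∃ t ∈ Icc (-(2 * c)) (2 * c), ∀ t₀ ∈ Icc (-(2 * c)) (2 * c),
      x ∈ slab (helixUnitBinormal t₀) ⟪helix t₀, helixUnitBinormal t₀⟫ (M * (t - t₀) ^ 2) := by
    rw [hS]
    rintro _ ⟨t, v, ht, hv, rfl⟩
    exact ⟨t, ht, fun t₀ ht₀ ↦ hmem t ht t₀ ht₀ v (Ioo_subset_Icc_self hv)⟩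
  exact hμ0 (measure_eq_zero_of_slab_family μ hμS hslab hM norm_helixUnitBinormal hcover
    (lt_min (by linarith) (by norm_num)))

/-- The tangent surface `S = {α(t) + v α'(t) : t ∈ [−2c,2c], a < v < b}` of the perturbed
helix `α(t) = (t, t²+t⁴, t³)` (with `α'(t) = (1, 2t+4t³, 3t²)`) has Fourier dimension
at most `1`. -/
theorem statement6 (a b c : ℝ) (ha : 0 < a) (hab : a < b) (hc : 0 < c)
    (S : Set (EuclideanSpace ℝ (Fin 3)))
    (hS : S = {x : EuclideanSpace ℝ (Fin 3) | ∃ t v : ℝ,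
      t ∈ Set.Icc (-(2 * c)) (2 * c) ∧ v ∈ Set.Ioo a b ∧
      x = pt3 (t + v) (t ^ 2 + t ^ 4 + v * (2 * t + 4 * t ^ 3)) (t ^ 3 + v * (3 * t ^ 2))}) :
    fourierDim S ≤ 1 :=
  statement6_general a b c S hS
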